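/- arXiv:1907.00347 — 2 statements merged into one kernel-verified Lean document; each statement's English description precedes it below -/
import Mathlib

section
/- If f and g are hyperbolic Möbius transformations of the upper half-plane whose axes cross in ℍ at an angle θ, then C(f,g) = −tan²(θ/2). -/
set_option synthInstance.maxHeartbeats 1000000
noncomputable section

open Filter Topology Set UpperHalfPlane
open scoped OnePoint MatrixGroups

/-- The group of (orientation-preserving) Möbius transformations of the upper half-plane,
represented by real 2×2 matrices with positive determinant. -/
abbrev Mob : Type := GL(2, ℝ)⁺

namespace Paper

/-- Matrix entries of a Möbius transformation. -/
def ma (g : Mob) : ℝ := (((g : GL (Fin 2) ℝ) : Matrix (Fin 2) (Fin 2) ℝ)) 0 0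
def mb (g : Mob) : ℝ := (((g : GL (Fin 2) ℝ) : Matrix (Fin 2) (Fin 2) ℝ)) 0 1
def mc (g : Mob) : ℝ := (((g : GL (Fin 2) ℝ) : Matrix (Fin 2) (Fin 2) ℝ)) 1 0
def md (g : Mob) : ℝ := (((g : GL (Fin 2) ℝ) : Matrix (Fin 2) (Fin 2) ℝ)) 1 1

/-- The action of a Möbius transformation on the extended real line `ℝ̄ = ℝ ∪ {∞}`,
realized as the one-point compactification `OnePoint ℝ` (a topological circle). -/
def bnd (g : Mob) : OnePoint ℝ → OnePoint ℝ
  | ∞ => if mc g = 0 then ∞ else ((ma g / mc g : ℝ) : OnePoint ℝ)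
  | (x : ℝ) => if mc g * x + md g = 0 then ∞
      else (((ma g * x + mb g) / (mc g * x + md g) : ℝ) : OnePoint ℝ)

/-- The fixed points of a Möbius transformation on the extended real line. -/
def FixedPoints (g : Mob) : Set (OnePoint ℝ) := {x | bnd g x = x}

/-- A Möbius transformation is hyperbolic iff it has exactly two fixed points
on the extended real line. -/
def IsHyperbolic (g : Mob) : Prop :=
  ∃ p q : OnePoint ℝ, p ≠ q ∧ FixedPoints g = {p, q}

/-- `p` is the attracting fixed point of `g`: it is fixed, and the iterates of every
non-fixed boundary point converge to it. -/
def IsAttractingFixedPoint (g : Mob) (p : OnePoint ℝ) : Prop :=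
  bnd g p = p ∧ ∀ x : OnePoint ℝ, x ∉ FixedPoints g →
    Tendsto (fun n => (bnd g)^[n] x) atTop (𝓝 p)

/-- The attracting fixed point α(g) of a hyperbolic transformation. -/
def att (g : Mob) : OnePoint ℝ := Classical.epsilon (IsAttractingFixedPoint g)

/-- The repelling fixed point β(g) of a hyperbolic transformation. -/
def rep (g : Mob) : OnePoint ℝ := Classical.epsilon (IsAttractingFixedPoint g⁻¹)

/-- The hyperbolic geodesic of ℍ with the given endpoints on the extended real line:
a vertical line if one endpoint is `∞`, and a semicircle orthogonal to ℝ otherwise. -/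
def geodesic (u v : OnePoint ℝ) : Set UpperHalfPlane :=
  match u, v with
  | ∞, ∞ => ∅
  | ∞, (x : ℝ) => {z | (z : ℂ).re = x}
  | (x : ℝ), ∞ => {z | (z : ℂ).re = x}
  | (x : ℝ), (y : ℝ) =>
      if x = y then ∅ else {z | ‖(z : ℂ) - (((x + y) / 2 : ℝ) : ℂ)‖ = |x - y| / 2}

/-- The axis of a hyperbolic transformation: the geodesic joining α(g) and β(g). -/
def axisOf (g : Mob) : Set UpperHalfPlane := geodesic (att g) (rep g)

/-- The translation length τ(g): the distance `ρ(w, g w)` for points `w` on the axis of `g`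
(with respect to the hyperbolic metric of ℍ). -/
def transLength (g : Mob) : ℝ := sInf {r : ℝ | ∃ w ∈ axisOf g, r = dist w (g • w)}

/-- Homogeneous-coordinate "difference" of two points of the extended real line:
`dd x y = x - y` for finite points, extended projectively to `∞`. -/
def dd : OnePoint ℝ → OnePoint ℝ → ℝ
  | ∞, ∞ => 0
  | ∞, (_ : ℝ) => 1
  | (_ : ℝ), ∞ => -1
  | (x : ℝ), (y : ℝ) => x - y

/-- The cross ratio `C(f,g) = ((α f − α g)(β f − β g)) / ((α f − β g)(β f − α g))`
of two hyperbolic transformations, computed projectively so that `∞` is allowed as a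
fixed point.  (Real-valued; the statements below only use it when it is finite.) -/
def crossRatio (f g : Mob) : ℝ :=
  (dd (att f) (att g) * dd (rep f) (rep g)) / (dd (att f) (rep g) * dd (rep f) (att g))

/-- The space of self-maps of ℍ with the topology (uniform structure) of uniform
convergence on compact subsets. -/
abbrev CompactConv := UniformOnFun UpperHalfPlane UpperHalfPlane {K : Set UpperHalfPlane | IsCompact K}

/-- The transformation of ℍ induced by `g`, as an element of the space of maps with the
topology of uniform convergence on compact sets. -/
def toMap (g : Mob) : CompactConv :=
  UniformOnFun.ofFun {K : Set UpperHalfPlane | IsCompact K} (fun z => g • z)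

/-- The set of transformations of ℍ induced by a set of Möbius transformations. -/
def transforms (S : Set Mob) : Set CompactConv := toMap '' S

/-- The identity transformation. -/
def idMap : CompactConv := UniformOnFun.ofFun {K : Set UpperHalfPlane | IsCompact K} id

/-- A set of Möbius transformations is semidiscrete if the identity transformation is not
an accumulation point of the induced set of transformations of ℍ, in the topology of
uniform convergence on compact sets. -/
def IsSemidiscrete (S : Set Mob) : Prop := ¬ AccPt idMap (𝓟 (transforms S))

/-- `g` acts as the identity transformation of ℍ. -/
def ActsAsId (g : Mob) : Prop := ∀ z : UpperHalfPlane, g • z = z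

/-- A set of Möbius transformations is inverse-free if (as a set of transformations) it
contains no inverse of any of its elements, i.e. no composition of two of its elements is
the identity transformation. -/
def InverseFree (S : Set Mob) : Prop := ∀ f ∈ S, ∀ g ∈ S, ¬ ActsAsId (f * g)

/-- The semigroup generated by a set of Möbius transformations: all finite compositions. -/
def semigroupOf (F : Set Mob) : Set Mob := (Subsemigroup.closure F : Subsemigroup Mob)

/-- The induced set of transformations of ℍ is discrete. -/
def IsDiscreteSet (S : Set Mob) : Prop := DiscreteTopology ↥(transforms S)

/-- `S` is a discrete group (of transformations): closed under composition and inverses as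
a set of transformations, and discrete. -/
def IsDiscreteGroupOfTransforms (S : Set Mob) : Prop :=
  (∀ f ∈ S, ∀ g ∈ S, ∃ h ∈ S, ∀ z : UpperHalfPlane, (f * g) • z = h • z) ∧
  (∀ f ∈ S, ∃ g ∈ S, ActsAsId (f * g)) ∧ IsDiscreteSet S

/-- An open interval of the extended real line (circle): a nonempty, open, connected,
proper subset. -/
def IsOpenArc (I : Set (OnePoint ℝ)) : Prop := IsOpen I ∧ IsConnected I ∧ I ≠ univ

/-- There are `m` open intervals of ℝ̄ with pairwise disjoint closures whose union `C`
is mapped strictly inside itself (`f(C̄) ⊆ C`) by every element of `F`. -/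
def SchottkyConfig (F : Set Mob) (m : ℕ) : Prop :=
  ∃ I : Fin m → Set (OnePoint ℝ), (∀ i, IsOpenArc (I i)) ∧
    (Pairwise fun i j => Disjoint (closure (I i)) (closure (I j))) ∧
    ∀ f ∈ F, bnd f '' closure (⋃ i, I i) ⊆ ⋃ i, I i

/-- The semigroup generated by `F` is a Schottky semigroup of rank `m`: `m` is the least
positive number of intervals in a configuration as above. -/
def IsSchottkyOfRank (F : Set Mob) (m : ℕ) : Prop :=
  0 < m ∧ SchottkyConfig F m ∧ ∀ k : ℕ, 0 < k → SchottkyConfig F k → m ≤ k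

/-- The unit tangent direction at `p ∈ ℍ` of the hyperbolic geodesic ray from `p` to the
boundary point `u`. -/
def dirTo (p : UpperHalfPlane) (u : OnePoint ℝ) : ℂ :=
  match u with
  | ∞ => Complex.I
  | (x : ℝ) =>
      if x = (p : ℂ).re then -Complex.I
      else
        (fun t : ℂ => (if (p : ℂ).re < x then -t else t) / ((‖t‖ : ℝ) : ℂ))
          (Complex.I * ((p : ℂ) -
            (((x ^ 2 - (p : ℂ).re ^ 2 - (p : ℂ).im ^ 2) / (2 * (x - (p : ℂ).re)) : ℝ) : ℂ)))

/-- The (hyperbolic = Euclidean, by conformality) angle at `p` between the geodesic rays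
from `p` to the boundary points `u` and `v`; this is the angle at `p` of the hyperbolic
triangle with vertices `u`, `v`, `p`. -/
def angleAt (p : UpperHalfPlane) (u v : OnePoint ℝ) : ℝ :=
  Real.arccos ((dirTo p u * (starRingEnd ℂ) (dirTo p v)).re)

/-- The geodesic with endpoints `u, v` crosses the axis of `g` orthogonally. -/
def PerpToAxis (u v : OnePoint ℝ) (g : Mob) : Prop :=
  ∃ p : UpperHalfPlane, p ∈ geodesic u v ∧ p ∈ axisOf g ∧
    angleAt p u (att g) = Real.pi / 2

/-- An interval `I ⊆ ℝ̄` is symmetric with respect to `g` if the hyperbolic geodesic with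
the same endpoints as `I` is perpendicular to the axis of `g`. -/
def SymmetricWrt (g : Mob) (I : Set (OnePoint ℝ)) : Prop :=
  ∃ u v : OnePoint ℝ, u ≠ v ∧ frontier I = {u, v} ∧ PerpToAxis u v g

/-- Embedding of the boundary circle ℝ̄ into the Riemann sphere `ℂ̄ = OnePoint ℂ`. -/
def embR : OnePoint ℝ → OnePoint ℂ
  | ∞ => ∞
  | (r : ℝ) => ((r : ℂ) : OnePoint ℂ)

/-- The orbit of the base point `i` under a set of Möbius transformations, viewed inside
the Riemann sphere. -/
def orbitPts (S : Set Mob) : Set (OnePoint ℂ) :=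
  {w | ∃ g ∈ S, w = ((((g • UpperHalfPlane.I : UpperHalfPlane) : ℂ) : OnePoint ℂ))}

/-- The forward limit set Λ⁺(S): boundary accumulation points of the orbit of `i`. -/
def forwardLimitSet (S : Set Mob) : Set (OnePoint ℝ) :=
  {x | AccPt (embR x) (𝓟 (orbitPts S))}

/-- The backward limit set Λ⁻(S) = Λ⁺(S⁻¹). -/
def backwardLimitSet (S : Set Mob) : Set (OnePoint ℝ) :=
  forwardLimitSet ((·⁻¹) '' S)

/-- `a, b, c` lie in (strictly increasing) cyclic order on the circle ℝ̄, for one fixed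
orientation. -/
def cyc (a b c : OnePoint ℝ) : Prop := 0 < dd a b * dd b c * dd c a

/-- Four points lie in the cyclic order `a, b, c, d` on the circle ℝ̄ (in one of the two
orientations). -/
def InCyclicOrder (a b c d : OnePoint ℝ) : Prop :=
  (cyc a b c ∧ cyc a c d) ∨ (cyc a d c ∧ cyc a c b)

/-- The closed arc from `u` to `v` not containing `w`. -/
def closedArcAvoiding (u v w : OnePoint ℝ) : Set (OnePoint ℝ) :=
  {x | ((cyc w u x ∨ u = x) ∧ (cyc w x v ∨ x = v)) ∨
       ((cyc w v x ∨ v = x) ∧ (cyc w x u ∨ x = u))}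

/-- The open arc from `u` to `v` not containing `w`. -/
def openArcAvoiding (u v w : OnePoint ℝ) : Set (OnePoint ℝ) :=
  {x | (cyc w u x ∧ cyc w x v) ∨ (cyc w v x ∧ cyc w x u)}

end Paper

/-!
Seen from `p = s + t i ∈ ℍ`, a boundary point `u` has the homogeneous coordinate `ζ_u = u - p`
(with `ζ_∞ = 1`; `bdryOffset p u` below). In these terms `dd u v = -Im (conj ζ_u * ζ_v) / t`,
the unit tangent at `p` of the ray towards `u` is `i ζ_u / conj ζ_u`, and `p` lies on the
geodesic `uv` exactly when `Re (conj ζ_u * ζ_v) = 0`, i.e. `ζ_v ∈ i ℝ ζ_u`. With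
`z = conj ζ_{α f} * ζ_{α g}` the cross ratio collapses to `-(Im z / Re z)²`, while
`cos θ = Re (conj z / z) = cos (2 arg z)`, so the half-angle formula gives
`tan² (θ/2) = (Im z / Re z)²`.
-/

open ComplexConjugate

/-- At `C = -1` both sides vanish, through the junk values `tan (π / 2) = 0` and `x / 0 = 0`. -/
theorem Real.tan_sq_half_arccos {C : ℝ} (h₁ : -1 ≤ C) (h₂ : C ≤ 1) :
    Real.tan (Real.arccos C / 2) ^ 2 = (1 - C) / (1 + C) := by
  rcases h₁.eq_or_lt with rfl | h₁
  · norm_num [Real.arccos_neg_one, Real.tan_pi_div_two]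
  have hcos := Real.cos_eq_two_mul_tan_half_div_one_sub_tan_half_sq (Real.arccos C)
  rw [Real.cos_arccos h₁.le h₂] at hcos
  have hpos : 0 < 1 + Real.tan (Real.arccos C / 2) ^ 2 := by positivity
  rw [eq_div_iff hpos.ne'] at hcos
  rw [eq_div_iff (by linarith)]
  linarith [hcos h₁.ne']

namespace Complex

theorem tan_sq_half_arccos_re_conj_div_self {z : ℂ} (hz : z ≠ 0) :
    Real.tan (Real.arccos (conj z / z).re / 2) ^ 2 = z.im ^ 2 / z.re ^ 2 := by
  have hC : |(conj z / z).re| ≤ 1 := by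
    refine (abs_re_le_norm _).trans ?_
    rw [norm_div, norm_conj, div_self (norm_ne_zero_iff.mpr hz)]
  rw [Real.tan_sq_half_arccos (abs_le.mp hC).1 (abs_le.mp hC).2]
  have hN : normSq z ≠ 0 := (normSq_pos.mpr hz).ne'
  have h₁ : 1 - (conj z / z).re = 2 * z.im ^ 2 / normSq z := by
    rw [div_re, conj_re, conj_im]
    field_simp
    rw [normSq_apply]
    ring
  have h₂ : 1 + (conj z / z).re = 2 * z.re ^ 2 / normSq z := by
    rw [div_re, conj_re, conj_im]
    field_simp
    rw [normSq_apply]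
    ring
  rw [h₁, h₂, div_div_div_cancel_right₀ hN, mul_div_mul_left _ _ two_ne_zero]

theorem exists_eq_I_mul_ofReal_mul {a b : ℂ} (ha : a ≠ 0) (h : (conj a * b).re = 0) :
    ∃ r : ℝ, b = I * r * a := by
  refine ⟨(conj a * b).im / normSq a, ?_⟩
  have hab : conj a * b = I * (conj a * b).im := by
    apply Complex.ext <;> simp [h]
  have hN : (normSq a : ℂ) ≠ 0 := by exact_mod_cast (normSq_pos.mpr ha).ne'
  have hb : b * normSq a = I * (conj a * b).im * a := by
    rw [← hab, ← mul_conj]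
    ring
  rw [ofReal_div, mul_div_assoc', div_mul_eq_mul_div, eq_div_iff hN, hb]

theorem cross_ratio_of_re_conj_mul_eq_zero {a b c d : ℂ}
    (ha : a ≠ 0) (hb : b ≠ 0) (hc : c ≠ 0) (hd : d ≠ 0) (hab : (conj a * b).re = 0) (hcd : (conj c * d).re = 0) :
    (conj a * c).im * (conj b * d).im / ((conj a * d).im * (conj b * c).im)
      = -((conj a * c).im ^ 2 / (conj a * c).re ^ 2) := by
  obtain ⟨r, rfl⟩ := exists_eq_I_mul_ofReal_mul ha hab
  obtain ⟨s, rfl⟩ := exists_eq_I_mul_ofReal_mul hc hcd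
  have hr : r ≠ 0 := by rintro rfl; simp at hb
  have hs : s ≠ 0 := by rintro rfl; simp at hd
  set z := conj a * c
  have hbd : conj (I * r * a) * (I * s * c) = (r * s : ℝ) * z := by
    simp only [map_mul, conj_I, conj_ofReal, z]
    push_cast
    linear_combination (-(r * s) * conj a * c) * I_sq
  have had : conj a * (I * s * c) = I * s * z := by ring
  have hbc : conj (I * r * a) * c = -(I * r * z) := by
    simp only [map_mul, conj_I, conj_ofReal, z]
    ring
  rw [hbd, had, hbc]
  simp only [neg_im, mul_im, mul_re, I_re, I_im, ofReal_re, ofReal_im]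
  rcases eq_or_ne z.re 0 with h0 | h0
  · simp [h0]
  · field_simp
    ring

theorem ofReal_mul_div_norm {c : ℝ} (hc : 0 < c) (v : ℂ) :
    c * v / (‖(c : ℂ) * v‖ : ℂ) = v / (‖v‖ : ℂ) := by
  rw [norm_mul, norm_real, Real.norm_of_nonneg hc.le, ofReal_mul]
  exact mul_div_mul_left _ _ (ofReal_ne_zero.mpr hc.ne')

theorem I_mul_sq_div_norm {ζ : ℂ} (hζ : ζ ≠ 0) :
    I * ζ ^ 2 / (‖I * ζ ^ 2‖ : ℂ) = I * ζ / conj ζ := by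
  have hconj : conj ζ ≠ 0 := (map_ne_zero _).mpr hζ
  rw [norm_mul, norm_I, one_mul, norm_pow, ofReal_pow, ← mul_conj']
  field_simp

end Complex

namespace Paper

def bdryOffset (p : UpperHalfPlane) : OnePoint ℝ → ℂ
  | ∞ => 1
  | (x : ℝ) => x - p

lemma bdryOffset_ne_zero (p : UpperHalfPlane) (u : OnePoint ℝ) : bdryOffset p u ≠ 0 := by
  cases u with
  | infty => exact one_ne_zero
  | coe x =>
    intro h
    have him := congrArg Complex.im h
    simp [bdryOffset, p.im_pos.ne'] at him

lemma dd_eq_neg_im_div (p : UpperHalfPlane) (u v : OnePoint ℝ) :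
    dd u v = -(conj (bdryOffset p u) * bdryOffset p v).im / p.im := by
  have ht : p.im ≠ 0 := p.im_pos.ne'
  cases u <;> cases v <;>
    simp only [dd, bdryOffset, map_one, map_sub, one_mul, mul_one, Complex.conj_ofReal,
      Complex.mul_im, Complex.sub_re, Complex.sub_im, Complex.one_im, Complex.ofReal_re,
      Complex.ofReal_im, Complex.conj_re, Complex.conj_im, coe_re, coe_im, zero_sub, zero_add,
      mul_neg, neg_neg, neg_zero, zero_div, sub_neg_eq_add, neg_add_rev]
  all_goals field_simp
  ring

lemma re_conj_mul_bdryOffset_eq_zero {p : UpperHalfPlane} {u v : OnePoint ℝ}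
    (h : p ∈ geodesic u v) : (conj (bdryOffset p u) * bdryOffset p v).re = 0 := by
  cases u with
  | infty =>
    cases v with
    | infty => exact h.elim
    | coe y =>
      have hy : p.re = y := h
      simp [bdryOffset, hy]
  | coe x =>
    cases v with
    | infty =>
      have hx : p.re = x := h
      simp [bdryOffset, hx]
    | coe y =>
      simp only [geodesic] at h
      split_ifs at h with hxy
      · exact h.elim
      have hsq := congrArg (· ^ 2)
        (show ‖(p : ℂ) - ((x + y) / 2 : ℝ)‖ = |x - y| / 2 from h)
      simp only [Complex.sq_norm, Complex.normSq_apply, div_pow, sq_abs, Complex.sub_re,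
        Complex.sub_im, Complex.ofReal_re, Complex.ofReal_im, coe_re, coe_im, sub_zero] at hsq
      simp only [bdryOffset, map_sub, Complex.conj_ofReal, Complex.mul_re, Complex.sub_re,
        Complex.sub_im, Complex.ofReal_re, Complex.ofReal_im, Complex.conj_re, Complex.conj_im,
        coe_re, coe_im, zero_sub, mul_neg, sub_neg_eq_add]
      nlinarith [hsq]

lemma dirTo_eq (p : UpperHalfPlane) (u : OnePoint ℝ) :
    dirTo p u = Complex.I * bdryOffset p u / conj (bdryOffset p u) := by
  cases u with
  | infty => simp [dirTo, bdryOffset]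
  | coe x =>
    obtain ⟨w, rfl⟩ : ∃ w, x = p.re + w := ⟨x - p.re, by ring⟩
    have ht : (p.im : ℂ) ≠ 0 := Complex.ofReal_ne_zero.mpr p.im_pos.ne'
    have hζ : bdryOffset p (p.re + w : ℝ) = w - p.im * Complex.I := by
      apply Complex.ext <;> simp [bdryOffset]
    simp only [dirTo, UpperHalfPlane.coe_re, UpperHalfPlane.coe_im, add_sub_cancel_left,
      add_eq_left, lt_add_iff_pos_right]
    rcases eq_or_ne w 0 with rfl | hw
    · rw [if_pos rfl, hζ]
      simp only [Complex.ofReal_zero, zero_sub, map_neg, map_mul, Complex.conj_ofReal,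
        Complex.conj_I]
      field_simp
    -- the unnormalised tangent vector in `dirTo` is a real multiple of `I * ζ ^ 2`
    have hT : Complex.I * ((p : ℂ) - (((p.re + w) ^ 2 - p.re ^ 2 - p.im ^ 2) / (2 * w) : ℝ))
        = ((-(2 * w)⁻¹ : ℝ) : ℂ) * (Complex.I * bdryOffset p (p.re + w : ℝ) ^ 2) := by
      have : (w : ℂ) ≠ 0 := Complex.ofReal_ne_zero.mpr hw
      rw [hζ, ← Complex.re_add_im (p : ℂ)]
      simp only [UpperHalfPlane.coe_re, UpperHalfPlane.coe_im]
      push_cast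
      field_simp
      linear_combination (p.im ^ 2 : ℂ) * Complex.I_sq
    have hV := Complex.I_mul_sq_div_norm (bdryOffset_ne_zero p (p.re + w : ℝ))
    rw [if_neg hw, hT]
    split_ifs with hw₀
    · rw [← norm_neg, ← neg_mul, ← Complex.ofReal_neg,
        Complex.ofReal_mul_div_norm (by simpa using hw₀), hV]
    · have hw₁ : w < 0 := (not_lt.mp hw₀).lt_of_ne hw
      rw [Complex.ofReal_mul_div_norm (by rw [neg_pos, inv_lt_zero]; linarith), hV]

lemma dirTo_mul_conj_dirTo (p : UpperHalfPlane) (u v : OnePoint ℝ) :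
    dirTo p u * conj (dirTo p v) = conj (conj (bdryOffset p u) * bdryOffset p v) /
      (conj (bdryOffset p u) * bdryOffset p v) := by
  have hu : conj (bdryOffset p u) ≠ 0 := (map_ne_zero _).mpr (bdryOffset_ne_zero p u)
  have hv : conj (bdryOffset p v) ≠ 0 := (map_ne_zero _).mpr (bdryOffset_ne_zero p v)
  have hu₀ := bdryOffset_ne_zero p u
  have hv₀ := bdryOffset_ne_zero p v
  rw [dirTo_eq, dirTo_eq]
  simp only [map_div₀, map_mul, Complex.conj_I, Complex.conj_conj]
  field_simp
  linear_combination -Complex.I_sq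

theorem cross_ratio_eq_neg_tan_sq_half_angleAt {p : UpperHalfPlane} {a b c d : OnePoint ℝ}
    (hab : p ∈ geodesic a b) (hcd : p ∈ geodesic c d) :
    dd a c * dd b d / (dd a d * dd b c) = -Real.tan (angleAt p a c / 2) ^ 2 := by
  have ht : p.im * p.im ≠ 0 := mul_ne_zero p.im_pos.ne' p.im_pos.ne'
  have hz : conj (bdryOffset p a) * bdryOffset p c ≠ 0 :=
    mul_ne_zero ((map_ne_zero _).mpr (bdryOffset_ne_zero p a)) (bdryOffset_ne_zero p c)
  rw [angleAt, dirTo_mul_conj_dirTo, Complex.tan_sq_half_arccos_re_conj_div_self hz]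
  simp only [dd_eq_neg_im_div p, neg_div, neg_mul_neg, div_mul_div_comm]
  rw [div_div_div_cancel_right₀ ht]
  exact Complex.cross_ratio_of_re_conj_mul_eq_zero (bdryOffset_ne_zero p a)
    (bdryOffset_ne_zero p b) (bdryOffset_ne_zero p c) (bdryOffset_ne_zero p d)
    (re_conj_mul_bdryOffset_eq_zero hab) (re_conj_mul_bdryOffset_eq_zero hcd)

end Paper

open Paper in
theorem statement3_general (f g : Mob)
    (p : UpperHalfPlane) (hpf : p ∈ axisOf f) (hpg : p ∈ axisOf g)
    (θ : ℝ) (hθ : θ = angleAt p (att f) (att g)) :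
    crossRatio f g = -(Real.tan (θ / 2)) ^ 2 := by
  rw [hθ]
  exact cross_ratio_eq_neg_tan_sq_half_angleAt hpf hpg

open Paper in
/-- Lemma 2.1(i): if the axes of the hyperbolic transformations `f` and
`g` cross at a point of ℍ at an angle `θ`, then `C(f,g) = −tan²(θ/2)`. -/
theorem statement3 (f g : Mob) (hf : IsHyperbolic f) (hg : IsHyperbolic g)
    (p : UpperHalfPlane) (hpf : p ∈ axisOf f) (hpg : p ∈ axisOf g)
    (θ : ℝ) (hθ : θ = angleAt p (att f) (att g)) :
    crossRatio f g = -(Real.tan (θ / 2)) ^ 2 :=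
  statement3_general f g p hpf hpg θ hθ
end
end

section
/- Let f₁, f₂, …, fₙ be hyperbolic Möbius transformations of the upper half-plane that all have the same attracting fixed point: α(f₁) = α(f₂) = ⋯ = α(fₙ). If τ(fᵢ) > log 5 for every i = 1, …, n, then there exist open intervals A and B in ℝ̄ with disjoint closures such that fᵢ maps the complement of B into A for every i = 1, …, n. -/
set_option synthInstance.maxHeartbeats 1000000
noncomputable section

open Filter Topology Set UpperHalfPlane
open scoped OnePoint MatrixGroups

/-!
Conjugating the common attracting fixed point to `∞` turns every `fᵢ` into an affine map
`x ↦ λᵢ x + cᵢ`, and `∞` is attracting exactly when `λᵢ > 1`. Expanding affine maps send the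
complement of a long interval `(-N, N)` into the neighbourhood `{|x| > N + 1} ∪ {∞}` of `∞`;
pulling this pair of arcs back by the conjugating map gives `A` and `B`.
-/

namespace Paper

open Bornology

lemma det_pos (g : Mob) : 0 < ma g * md g - mb g * mc g := by
  have h := g.property
  rwa [Matrix.mem_glpos, Matrix.GeneralLinearGroup.val_det_apply, Matrix.det_fin_two] at h

lemma bnd_eq_smul (g : Mob) (x : OnePoint ℝ) : bnd g x = (g : GL (Fin 2) ℝ) • x := by
  cases x with
  | infty => rw [OnePoint.smul_infty_eq_ite]; rfl
  | coe y => rw [OnePoint.smul_some_eq_ite]; rfl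

lemma bnd_mul (g h : Mob) (x : OnePoint ℝ) : bnd (g * h) x = bnd g (bnd h x) := by
  simp only [bnd_eq_smul, Subgroup.coe_mul, mul_smul]

lemma bnd_inv_bnd (g : Mob) (x : OnePoint ℝ) : bnd g⁻¹ (bnd g x) = x := by
  simp only [bnd_eq_smul, Subgroup.coe_inv, inv_smul_smul]

lemma bnd_bnd_inv (g : Mob) (x : OnePoint ℝ) : bnd g (bnd g⁻¹ x) = x := by
  simp only [bnd_eq_smul, Subgroup.coe_inv, smul_inv_smul]

lemma bnd_injective (g : Mob) : Function.Injective (bnd g) :=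
  Function.LeftInverse.injective (bnd_inv_bnd g)

lemma bnd_conj (k g : Mob) (x : OnePoint ℝ) : bnd (k * g * k⁻¹) (bnd k x) = bnd k (bnd g x) := by
  rw [bnd_mul, bnd_mul, bnd_inv_bnd]

lemma bnd_infty_eq_infty_iff (g : Mob) : bnd g ∞ = ∞ ↔ mc g = 0 := by
  rw [bnd_eq_smul, OnePoint.smul_infty_eq_self_iff]; rfl

lemma tendsto_coe_infty_of_cobounded {α : Type*} {l : Filter α} {u : α → ℝ}
    (h : Tendsto u l (cobounded ℝ)) : Tendsto (fun a => (u a : OnePoint ℝ)) l (𝓝 ∞) :=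
  OnePoint.tendsto_coe_infty.comp <| by
    rwa [coclosedCompact_eq_cocompact, ← Metric.cobounded_eq_cocompact]

/-- The Möbius transformation `x ↦ 1 / (r - x)`, which sends `r` to `∞`. -/
def inversionAt (r : ℝ) : Mob :=
  Matrix.SpecialLinearGroup.toGLPos
    ⟨!![0, -1; 1, -r], by simp [Matrix.det_fin_two_of]⟩

lemma inversionAt_entries (r : ℝ) :
    ma (inversionAt r) = 0 ∧ mb (inversionAt r) = -1 ∧ mc (inversionAt r) = 1 ∧
      md (inversionAt r) = -r :=
  ⟨rfl, rfl, rfl, rfl⟩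

lemma bnd_inversionAt_infty (r : ℝ) : bnd (inversionAt r) ∞ = (0 : ℝ) := by
  obtain ⟨ha, -, hc, -⟩ := inversionAt_entries r
  simp [bnd, ha, hc]

lemma bnd_inversionAt_coe (r y : ℝ) :
    bnd (inversionAt r) y = if y = r then ∞ else ((r - y)⁻¹ : ℝ) := by
  obtain ⟨ha, hb, hc, hd⟩ := inversionAt_entries r
  simp only [bnd, ha, hb, hc, hd, one_mul, zero_mul, ← sub_eq_add_neg, sub_eq_zero]
  split_ifs
  · rfl
  · rw [zero_sub, neg_div, ← div_neg, neg_sub, one_div]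

lemma continuous_bnd_inversionAt (r : ℝ) : Continuous (bnd (inversionAt r)) := by
  rw [OnePoint.continuous_iff]
  refine ⟨?_, continuous_iff_continuousAt.2 fun y => ?_⟩
  · rw [bnd_inversionAt_infty, coclosedCompact_eq_cocompact, ← Metric.cobounded_eq_cocompact]
    have hlim : Tendsto (fun y : ℝ => (r - y)⁻¹) (cobounded ℝ) (𝓝 0) :=
      tendsto_inv₀_cobounded.comp (tendsto_const_sub_cobounded r)
    refine ((OnePoint.continuous_coe.tendsto 0).comp hlim).congr' ?_
    filter_upwards [eventually_ne_cobounded r] with y hy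
    rw [Function.comp_apply, bnd_inversionAt_coe, if_neg hy]
  rcases eq_or_ne y r with rfl | hy
  · rw [ContinuousAt, bnd_inversionAt_coe, if_pos rfl, ← nhdsNE_sup_pure, tendsto_sup]
    refine ⟨?_, by
      simpa [bnd_inversionAt_coe] using tendsto_pure_nhds (fun z : ℝ => bnd (inversionAt y) z) y⟩
    have hsub : Tendsto (fun z : ℝ => y - z) (𝓝[≠] y) (𝓝[≠] 0) := by
      refine tendsto_nhdsWithin_iff.2 ⟨?_, ?_⟩
      · simpa using ((continuous_sub_left y).tendsto y).mono_left nhdsWithin_le_nhds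
      · filter_upwards [self_mem_nhdsWithin] with z hz
        exact sub_ne_zero.2 (Ne.symm hz)
    refine (tendsto_coe_infty_of_cobounded (tendsto_inv₀_nhdsNE_zero.comp hsub)).congr' ?_
    filter_upwards [self_mem_nhdsWithin] with z (hz : z ≠ y)
    rw [Function.comp_apply, bnd_inversionAt_coe, if_neg hz]
  · have hcont : ContinuousAt (fun z : ℝ => (((r - z)⁻¹ : ℝ) : OnePoint ℝ)) y :=
      OnePoint.continuous_coe.continuousAt.comp
        ((continuous_sub_left r).continuousAt.inv₀ (sub_ne_zero.2 hy.symm))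
    refine hcont.congr ?_
    filter_upwards [eventually_ne_nhds hy] with z hz
    rw [bnd_inversionAt_coe, if_neg hz]

/-- A Möbius transformation fixing `∞` acts on `ℝ` as `x ↦ lam g * x + cc g`. -/
def lam (g : Mob) : ℝ := ma g / md g

def cc (g : Mob) : ℝ := mb g / md g

lemma md_ne_zero_of_mc_eq_zero {g : Mob} (hc : mc g = 0) : md g ≠ 0 := by
  intro hd
  have := det_pos g
  simp [hc, hd] at this

lemma lam_pos {g : Mob} (hc : mc g = 0) : 0 < lam g := by
  have := det_pos g
  rw [hc, mul_zero, sub_zero] at this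
  exact div_pos_iff.2 (pos_and_pos_or_neg_and_neg_of_mul_pos this)

lemma bnd_eq_map_of_mc_eq_zero {g : Mob} (hc : mc g = 0) :
    bnd g = OnePoint.map fun y => lam g * y + cc g := by
  have hd := md_ne_zero_of_mc_eq_zero hc
  funext x
  cases x with
  | infty => simp [bnd, hc]
  | coe y =>
    simp only [bnd, hc, zero_mul, zero_add, if_neg hd, OnePoint.map_some, lam, cc]
    congr 1
    field_simp

lemma continuous_map_affine {a : ℝ} (ha : a ≠ 0) (b : ℝ) :
    Continuous (OnePoint.map fun y : ℝ => a * y + b) :=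
  (Homeomorph.onePointCongr (affineHomeomorph a b ha)).continuous

/-- For `c ≠ 0`, `(a x + b) / (c x + d) = a / c + (ad - bc) / c² · 1 / (-d / c - x)`. -/
lemma bnd_eq_map_comp_bnd_inversionAt {g : Mob} (hc : mc g ≠ 0) :
    bnd g = OnePoint.map (fun y => (ma g * md g - mb g * mc g) / mc g ^ 2 * y + ma g / mc g) ∘
      bnd (inversionAt (-(md g / mc g))) := by
  have hpole : ∀ y : ℝ, mc g * y + md g = 0 ↔ y = -(md g / mc g) := fun y => by
    rw [eq_neg_iff_add_eq_zero]
    constructor <;> intro h <;> field_simp at h ⊢ <;> linarith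
  funext x
  cases x with
  | infty =>
    rw [Function.comp_apply, bnd_inversionAt_infty, OnePoint.map_some, mul_zero, zero_add]
    exact if_neg hc
  | coe y =>
    rw [Function.comp_apply, bnd_inversionAt_coe]
    by_cases hy : y = -(md g / mc g)
    · rw [if_pos hy, OnePoint.map_infty]
      exact if_pos ((hpole y).2 hy)
    · rw [if_neg hy, OnePoint.map_some]
      refine (if_neg (mt (hpole y).1 hy)).trans (congrArg _ ?_)
      have hden : mc g * y + md g ≠ 0 := mt (hpole y).1 hy
      have ht : (-(md g / mc g) - y)⁻¹ * (mc g * y + md g) = -mc g := by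
        rw [show -(md g / mc g) - y = -(mc g * y + md g) / mc g by field_simp; ring, inv_div]
        field_simp
      generalize (-(md g / mc g) - y)⁻¹ = t at ht ⊢
      rw [div_eq_iff hden]
      field_simp
      linear_combination (mb g * mc g - ma g * md g) * ht

lemma continuous_bnd (g : Mob) : Continuous (bnd g) := by
  by_cases hc : mc g = 0
  · rw [bnd_eq_map_of_mc_eq_zero hc]
    exact continuous_map_affine (lam_pos hc).ne' _
  · rw [bnd_eq_map_comp_bnd_inversionAt hc]
    exact (continuous_map_affine (div_ne_zero (det_pos g).ne' (pow_ne_zero 2 hc)) _).comp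
      (continuous_bnd_inversionAt _)

def bndHomeo (g : Mob) : OnePoint ℝ ≃ₜ OnePoint ℝ where
  toFun := bnd g
  invFun := bnd g⁻¹
  left_inv := bnd_inv_bnd g
  right_inv := bnd_bnd_inv g
  continuous_toFun := continuous_bnd g
  continuous_invFun := continuous_bnd g⁻¹

@[simp]
lemma coe_bndHomeo (g : Mob) : ⇑(bndHomeo g) = bnd g :=
  rfl

lemma semiconj_bnd_conj (k g : Mob) : Function.Semiconj (bnd k) (bnd g) (bnd (k * g * k⁻¹)) :=
  fun x => (bnd_conj k g x).symm

lemma fixedPoints_conj (k g : Mob) : FixedPoints (k * g * k⁻¹) = bnd k '' FixedPoints g := by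
  ext x
  rw [← bnd_bnd_inv k x, (bnd_injective k).mem_set_image]
  simp only [FixedPoints, mem_ofPred_eq, bnd_conj, (bnd_injective k).eq_iff]

lemma IsHyperbolic.conj {g : Mob} (hg : IsHyperbolic g) (k : Mob) :
    IsHyperbolic (k * g * k⁻¹) := by
  obtain ⟨p, q, hpq, hfix⟩ := hg
  refine ⟨bnd k p, bnd k q, (bnd_injective k).ne hpq, ?_⟩
  rw [fixedPoints_conj, hfix, image_pair]

lemma IsAttractingFixedPoint.conj {g : Mob} {p : OnePoint ℝ} (hp : IsAttractingFixedPoint g p)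
    (k : Mob) : IsAttractingFixedPoint (k * g * k⁻¹) (bnd k p) := by
  refine ⟨by rw [bnd_conj, hp.1], fun x hx => ?_⟩
  rw [← bnd_bnd_inv k x, fixedPoints_conj, (bnd_injective k).mem_set_image] at hx
  have hlim := ((continuous_bnd k).tendsto p).comp (hp.2 _ hx)
  refine hlim.congr fun n => ?_
  rw [Function.comp_apply, (semiconj_bnd_conj k g).iterate_right n, bnd_bnd_inv]

lemma IsHyperbolic.exists_notMem_fixedPoints {g : Mob} (hg : IsHyperbolic g) :
    ∃ x, x ∉ FixedPoints g := by
  obtain ⟨p, q, -, hfix⟩ := hg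
  by_contra! h
  exact infinite_univ (α := OnePoint ℝ) <| (eq_univ_of_forall h ▸ hfix ▸ toFinite _)

lemma IsAttractingFixedPoint.eq {g : Mob} {p q : OnePoint ℝ} (hp : IsAttractingFixedPoint g p)
    (hq : IsAttractingFixedPoint g q) (hg : ∃ x, x ∉ FixedPoints g) : p = q := by
  obtain ⟨x, hx⟩ := hg
  exact tendsto_nhds_unique (hp.2 x hx) (hq.2 x hx)

lemma exists_bnd_eq_infty (p : OnePoint ℝ) : ∃ k : Mob, bnd k p = ∞ := by
  cases p with
  | infty => exact ⟨1, by rw [bnd_eq_smul, OneMemClass.coe_one, one_smul]⟩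
  | coe r => exact ⟨inversionAt r, by rw [bnd_inversionAt_coe, if_pos rfl]⟩

def affineFixedPoint (g : Mob) : ℝ := cc g / (1 - lam g)

section Affine

variable {g : Mob}

lemma lam_mul_affineFixedPoint_add (hl : lam g ≠ 1) :
    lam g * affineFixedPoint g + cc g = affineFixedPoint g := by
  have : 1 - lam g ≠ 0 := sub_ne_zero.2 hl.symm
  rw [affineFixedPoint]
  field_simp
  ring

lemma bnd_coe_eq_self_iff (hc : mc g = 0) (hl : lam g ≠ 1) (y : ℝ) :
    bnd g y = y ↔ y = affineFixedPoint g := by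
  rw [bnd_eq_map_of_mc_eq_zero hc, OnePoint.map_some, OnePoint.coe_eq_coe]
  have := lam_mul_affineFixedPoint_add hl
  constructor
  · intro h
    exact mul_left_cancel₀ (sub_ne_zero.2 hl) (by linear_combination h - this)
  · rintro rfl
    exact this

lemma iterate_bnd_coe (hc : mc g = 0) (hl : lam g ≠ 1) (n : ℕ) (y : ℝ) :
    (bnd g)^[n] y =
      ((lam g ^ n * (y - affineFixedPoint g) + affineFixedPoint g : ℝ) : OnePoint ℝ) := by
  induction n with
  | zero => simp
  | succ n ih =>
    rw [Function.iterate_succ_apply', ih, bnd_eq_map_of_mc_eq_zero hc, OnePoint.map_some]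
    congr 1
    linear_combination lam_mul_affineFixedPoint_add hl

lemma IsHyperbolic.lam_ne_one (hg : IsHyperbolic g) (hc : mc g = 0) : lam g ≠ 1 := by
  intro hl
  have hbnd : ∀ y : ℝ, bnd g y = ((y + cc g : ℝ) : OnePoint ℝ) := fun y => by
    rw [bnd_eq_map_of_mc_eq_zero hc, OnePoint.map_some, hl, one_mul]
  by_cases hcc : cc g = 0
  · have : FixedPoints g = univ := eq_univ_of_forall fun x => by
      cases x with
      | infty => exact (bnd_infty_eq_infty_iff g).2 hc
      | coe y => rw [FixedPoints, mem_ofPred_eq, hbnd, hcc, add_zero]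
    obtain ⟨x, hx⟩ := hg.exists_notMem_fixedPoints
    exact hx (this ▸ mem_univ x)
  · obtain ⟨p, q, hpq, hfix⟩ := hg
    have hinfty : ∀ x ∈ FixedPoints g, x = ∞ := fun x hx => by
      cases x with
      | infty => rfl
      | coe y =>
        rw [FixedPoints, mem_ofPred_eq, hbnd, OnePoint.coe_eq_coe, add_eq_left] at hx
        exact absurd hx hcc
    exact hpq ((hinfty p (hfix ▸ mem_insert p _)).trans
      (hinfty q (hfix ▸ mem_insert_of_mem p rfl)).symm)

lemma isAttractingFixedPoint_infty (hc : mc g = 0) (hl : 1 < lam g) :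
    IsAttractingFixedPoint g ∞ := by
  refine ⟨(bnd_infty_eq_infty_iff g).2 hc, fun x hx => ?_⟩
  cases x with
  | infty => exact absurd ((bnd_infty_eq_infty_iff g).2 hc) hx
  | coe y =>
    have hy : y - affineFixedPoint g ≠ 0 :=
      sub_ne_zero.2 fun h => hx ((bnd_coe_eq_self_iff hc hl.ne' y).2 h)
    simp only [iterate_bnd_coe hc hl.ne']
    refine tendsto_coe_infty_of_cobounded ?_
    exact (tendsto_add_const_cobounded _).comp <| (tendsto_mul_right_cobounded hy).comp <|
      (tendsto_pow_atTop_atTop_of_one_lt hl).mono_right IsOrderBornology.atTop_le_cobounded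

lemma isAttractingFixedPoint_affineFixedPoint (hc : mc g = 0) (hl : lam g < 1) :
    IsAttractingFixedPoint g (affineFixedPoint g) := by
  refine ⟨(bnd_coe_eq_self_iff hc hl.ne _).2 rfl, fun x hx => ?_⟩
  cases x with
  | infty => exact absurd ((bnd_infty_eq_infty_iff g).2 hc) hx
  | coe y =>
    simp only [iterate_bnd_coe hc hl.ne]
    refine (OnePoint.continuous_coe.tendsto _).comp ?_
    simpa using ((tendsto_pow_atTop_nhds_zero_of_lt_one (lam_pos hc).le hl).mul_const
      (y - affineFixedPoint g)).add_const (affineFixedPoint g)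

lemma IsHyperbolic.one_lt_lam (hg : IsHyperbolic g) (hattr : IsAttractingFixedPoint g ∞) :
    1 < lam g := by
  have hc := (bnd_infty_eq_infty_iff g).1 hattr.1
  refine (hg.lam_ne_one hc).lt_or_gt.resolve_left fun hl => ?_
  exact OnePoint.infty_ne_coe _ <|
    hattr.eq (isAttractingFixedPoint_affineFixedPoint hc hl) hg.exists_notMem_fixedPoints

end Affine

/-- `att g` is chosen by `Classical.epsilon`, so it suffices to exhibit some attracting fixed
point; conjugating a fixed point of `g` to `∞` reduces this to the affine case. -/
lemma IsHyperbolic.isAttractingFixedPoint_att {g : Mob} (hg : IsHyperbolic g) :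
    IsAttractingFixedPoint g (att g) := by
  refine Classical.epsilon_spec (p := IsAttractingFixedPoint g) ?_
  obtain ⟨p, q, -, hfix⟩ := id hg
  obtain ⟨k, hk⟩ := exists_bnd_eq_infty p
  have hc : mc (k * g * k⁻¹) = 0 := by
    rw [← bnd_infty_eq_infty_iff, ← hk, bnd_conj]
    exact congrArg _ (hfix ▸ mem_insert p {q} : p ∈ FixedPoints g)
  suffices ∃ p', IsAttractingFixedPoint (k * g * k⁻¹) p' by
    obtain ⟨p', hp'⟩ := this
    exact ⟨_, by simpa [mul_assoc] using hp'.conj k⁻¹⟩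
  rcases ((hg.conj k).lam_ne_one hc).lt_or_gt with hl | hl
  · exact ⟨_, isAttractingFixedPoint_affineFixedPoint hc hl⟩
  · exact ⟨_, isAttractingFixedPoint_infty hc hl⟩

lemma IsOpenArc.preimage {A : Set (OnePoint ℝ)} (hA : IsOpenArc A)
    (e : OnePoint ℝ ≃ₜ OnePoint ℝ) : IsOpenArc (e ⁻¹' A) := by
  refine ⟨hA.1.preimage e.continuous, e.isConnected_preimage.2 hA.2.1, fun h => hA.2.2 ?_⟩
  rw [← e.image_preimage A, h, image_univ, e.range_coe]

lemma isOpenArc_image_Ioo {a b : ℝ} (hab : a < b) :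
    IsOpenArc (((↑) : ℝ → OnePoint ℝ) '' Ioo a b) :=
  ⟨OnePoint.isOpenMap_coe _ isOpen_Ioo,
    (isConnected_Ioo hab).image _ OnePoint.continuous_coe.continuousOn,
    fun h => OnePoint.infty_notMem_image_coe (h ▸ mem_univ ∞)⟩

lemma isConnected_insert_infty_image {s : Set ℝ} (hs : IsConnected s) {l : Filter ℝ} [l.NeBot]
    (hl : l ≤ cocompact ℝ) (hsl : s ∈ l) :
    IsConnected (insert ∞ (((↑) : ℝ → OnePoint ℝ) '' s)) := by
  have hinfty : ∞ ∈ closure (((↑) : ℝ → OnePoint ℝ) '' s) :=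
    mem_closure_of_tendsto
      (OnePoint.tendsto_coe_infty.mono_left (coclosedCompact_eq_cocompact (X := ℝ) ▸ hl))
      (mem_of_superset hsl fun y hy => mem_image_of_mem _ hy)
  exact (hs.image _ OnePoint.continuous_coe.continuousOn).subset_closure (subset_insert _ _)
    (insert_subset hinfty subset_closure)

lemma isOpenArc_compl_image_Icc {a b : ℝ} (hab : a ≤ b) :
    IsOpenArc (((↑) : ℝ → OnePoint ℝ) '' Icc a b)ᶜ := by
  refine ⟨(isCompact_Icc.image OnePoint.continuous_coe).isClosed.isOpen_compl, ?_, ?_⟩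
  · have hcompl : (Icc a b)ᶜ = Iio a ∪ Ioi b := by
      ext y
      simp only [mem_compl_iff, mem_Icc, not_and_or, not_le, mem_union, mem_Iio, mem_Ioi]
    rw [OnePoint.compl_image_coe, hcompl, image_union, union_singleton, insert_union_distrib]
    exact IsConnected.union ⟨∞, mem_insert _ _, mem_insert _ _⟩
      (isConnected_insert_infty_image isConnected_Iio atBot_le_cocompact (Iio_mem_atBot a))
      (isConnected_insert_infty_image isConnected_Ioi atTop_le_cocompact (Ioi_mem_atTop b))
  · exact fun h => (h ▸ mem_univ (a : OnePoint ℝ)) (mem_image_of_mem _ (left_mem_Icc.2 hab))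

lemma exists_arcs_of_one_lt_lam {ι : Type*} [Finite ι] {g : ι → Mob} (hc : ∀ i, mc (g i) = 0)
    (hl : ∀ i, 1 < lam (g i)) :
    ∃ A B : Set (OnePoint ℝ), IsOpenArc A ∧ IsOpenArc B ∧
      Disjoint (closure A) (closure B) ∧ ∀ i, bnd (g i) '' Bᶜ ⊆ A := by
  obtain ⟨N, hN, hN0⟩ : ∃ N : ℝ, (∀ i, |cc (g i)| + 2 ≤ (lam (g i) - 1) * N) ∧ 0 < N :=
    ((eventually_all.2 fun i =>
      (tendsto_id.const_mul_atTop (sub_pos.2 (hl i))).eventually_ge_atTop _).and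
        (eventually_gt_atTop 0)).exists
  refine ⟨(((↑) : ℝ → OnePoint ℝ) '' Icc (-(N + 1)) (N + 1))ᶜ, (↑) '' Ioo (-N) N,
    isOpenArc_compl_image_Icc (by linarith), isOpenArc_image_Ioo (by linarith), ?_, ?_⟩
  · have hA : closure (((↑) : ℝ → OnePoint ℝ) '' Icc (-(N + 1)) (N + 1))ᶜ ⊆
        ((↑) '' Ioo (-(N + 1)) (N + 1))ᶜ :=
      closure_minimal (compl_subset_compl.2 (image_mono Ioo_subset_Icc_self))
        (OnePoint.isOpenMap_coe _ isOpen_Ioo).isClosed_compl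
    have hB : closure (((↑) : ℝ → OnePoint ℝ) '' Ioo (-N) N) ⊆ (↑) '' Ioo (-(N + 1)) (N + 1) :=
      (closure_minimal (image_mono Ioo_subset_Icc_self)
        (isCompact_Icc.image OnePoint.continuous_coe).isClosed).trans
        (image_mono (Icc_subset_Ioo (by linarith) (by linarith)))
    exact disjoint_compl_left.mono hA hB
  · rintro i _ ⟨x, hx, rfl⟩
    rw [bnd_eq_map_of_mc_eq_zero (hc i)]
    cases x with
    | infty => exact OnePoint.infty_notMem_image_coe
    | coe y =>
      have hy : N ≤ |y| := by
        by_contra! h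
        exact hx (mem_image_of_mem _ (abs_lt.1 h))
      have hbig : N + 1 < |lam (g i) * y + cc (g i)| := by
        have htri : |lam (g i) * y| ≤ |lam (g i) * y + cc (g i)| + |cc (g i)| := by
          simpa using abs_add_le (lam (g i) * y + cc (g i)) (-cc (g i))
        rw [abs_mul, abs_of_pos (lam_pos (hc i))] at htri
        nlinarith [hN i, hl i]
      rw [OnePoint.map_some, mem_compl_iff, OnePoint.coe_injective.mem_set_image, mem_Icc,
        ← abs_le]
      exact hbig.not_ge

end Paper

open Paper in
theorem statement12_general (n : ℕ) (f : Fin n → Mob) (hhyp : ∀ i, IsHyperbolic (f i))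
    (hsame : ∀ i j, att (f i) = att (f j)) :
    ∃ A B : Set (OnePoint ℝ), IsOpenArc A ∧ IsOpenArc B ∧
      Disjoint (closure A) (closure B) ∧
      ∀ i, Paper.bnd (f i) '' Bᶜ ⊆ A := by
  obtain ⟨p, hp⟩ : ∃ p, ∀ i, att (f i) = p := by
    rcases n with _ | n
    · exact ⟨∞, fun i => i.elim0⟩
    · exact ⟨att (f 0), fun i => hsame i 0⟩
  obtain ⟨k, hk⟩ := exists_bnd_eq_infty p
  have hattr (i : Fin n) : IsAttractingFixedPoint (k * f i * k⁻¹) ∞ := by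
    simpa only [hp i, hk] using (hhyp i).isAttractingFixedPoint_att.conj k
  obtain ⟨A, B, hA, hB, hAB, hmaps⟩ := exists_arcs_of_one_lt_lam
    (fun i => (bnd_infty_eq_infty_iff _).1 (hattr i).1)
    (fun i => ((hhyp i).conj k).one_lt_lam (hattr i))
  refine ⟨bnd k ⁻¹' A, bnd k ⁻¹' B, hA.preimage (bndHomeo k), hB.preimage (bndHomeo k), ?_, ?_⟩
  · rw [← coe_bndHomeo, ← Homeomorph.preimage_closure, ← Homeomorph.preimage_closure]
    exact hAB.preimage _
  · rintro i _ ⟨x, hx, rfl⟩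
    simpa only [bnd_conj, mem_preimage] using hmaps i ⟨bnd k x, hx, rfl⟩

open Paper in
/-- Lemma 2.8: if `f₁, …, fₙ` are hyperbolic transformations sharing
the same attracting fixed point and `τ(fᵢ) > log 5` for each `i`, then there are open
intervals `A, B` of ℝ̄ with disjoint closures such that every `fᵢ` maps the complement of
`B` into `A`. -/
theorem statement12 (n : ℕ) (f : Fin n → Mob) (hhyp : ∀ i, IsHyperbolic (f i))
    (hsame : ∀ i j, att (f i) = att (f j))
    (htau : ∀ i, Real.log 5 < transLength (f i)) :
    ∃ A B : Set (OnePoint ℝ), IsOpenArc A ∧ IsOpenArc B ∧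
      Disjoint (closure A) (closure B) ∧
      ∀ i, Paper.bnd (f i) '' Bᶜ ⊆ A :=
  statement12_general n f hhyp hsame
end
end
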